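/- The set of free (non-principal) ultrafilters on ℕ has cardinality 2^(2^ℵ₀). -/
import Mathlib

open Set Filter

namespace Pospisil

abbrev B := Finset ℕ × Finset (Finset ℕ)

noncomputable def d : ℕ ≃ B := (Denumerable.eqv B).symm

/-- trace of a set on a finset -/
noncomputable def tr (X : Set ℕ) (s : Finset ℕ) : Finset ℕ :=
  @Finset.filter _ (· ∈ X) (Classical.decPred _) s

lemma mem_tr {X : Set ℕ} {s : Finset ℕ} {n : ℕ} : n ∈ tr X s ↔ n ∈ s ∧ n ∈ X :=
  @Finset.mem_filter _ _ (Classical.decPred _) _ _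

/-- the independent family -/
def A (X : Set ℕ) : Set ℕ := {n | tr X (d n).1 ∈ (d n).2}

noncomputable def C (f : Set ℕ → Bool) (X : Set ℕ) : Set ℕ :=
  if f X then A X else (A X)ᶜ

open Classical in
noncomputable def sep (X Y : Set ℕ) : ℕ :=
  if h : ∃ n, ¬ (n ∈ X ↔ n ∈ Y) then h.choose else 0

lemma sep_spec {X Y : Set ℕ} (h : X ≠ Y) : ¬ (sep X Y ∈ X ↔ sep X Y ∈ Y) := by
  have h' : ∃ n, ¬ (n ∈ X ↔ n ∈ Y) := by
    by_contra hc
    push_neg at hc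
    exact h (Set.ext fun n => hc n)
  unfold sep
  rw [dif_pos h']
  exact h'.choose_spec

lemma key (f : Set ℕ → Bool) (T : Set (Set ℕ)) (hT : T.Finite) :
    {n : ℕ | ∀ X ∈ T, n ∈ C f X}.Infinite := by
  classical
  have hsep : (Set.image2 sep T T).Finite := hT.image2 _ hT
  set s₀ : Finset ℕ := hsep.toFinset with hs₀
  set N : ℕ := s₀.sup id + 1 with hN
  set Tf : Finset (Set ℕ) := hT.toFinset with hTf
  -- for each k build an element
  set s : ℕ → Finset ℕ := fun k => insert (k + N) s₀ with hs
  set 𝒜 : ℕ → Finset (Finset ℕ) :=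
    fun k => (Tf.filter (fun X => f X = true)).image (fun X => tr X (s k)) with h𝒜
  have hinj : Function.Injective (fun k => d.symm (s k, 𝒜 k)) := by
    intro a b hab
    have h0 : (s a, 𝒜 a) = (s b, 𝒜 b) := d.symm.injective hab
    have h1 : s a = s b := congrArg Prod.fst h0
    have ha : a + N ∉ s₀ := fun h => by
      have := Finset.le_sup (f := id) h; simp only [id] at this; omega
    have hb : b + N ∉ s₀ := fun h => by
      have := Finset.le_sup (f := id) h; simp only [id] at this; omega
    have : a + N = b + N := by
      have h2 : a + N ∈ s b := h1 ▸ Finset.mem_insert_self _ _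
      have h3 : b + N ∈ s a := h1.symm ▸ Finset.mem_insert_self _ _
      rcases Finset.mem_insert.mp h2 with h | h
      · exact h
      · exact absurd h ha
    omega
  apply Set.infinite_of_injective_forall_mem hinj
  intro k
  simp only [Set.mem_setOf_eq]
  intro X hX
  have hd : d (d.symm (s k, 𝒜 k)) = (s k, 𝒜 k) := d.apply_symm_apply _
  rw [C]
  by_cases hf : f X
  · rw [if_pos hf]
    simp only [A, Set.mem_setOf_eq, hd]
    exact Finset.mem_image_of_mem _ (Finset.mem_filter.mpr ⟨hT.mem_toFinset.mpr hX, hf⟩)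
  · rw [if_neg hf]
    simp only [A, Set.mem_compl_iff, Set.mem_setOf_eq, hd]
    intro hmem
    obtain ⟨Y, hY, hXY⟩ := Finset.mem_image.mp hmem
    obtain ⟨hYT, hfY⟩ := Finset.mem_filter.mp hY
    have hne : X ≠ Y := by rintro rfl; exact hf hfY
    have hsepmem : sep X Y ∈ s₀ := by
      rw [hs₀, Set.Finite.mem_toFinset]
      exact Set.mem_image2_of_mem hX (hT.mem_toFinset.mp hYT)
    have hsk : sep X Y ∈ s k := Finset.mem_insert_of_mem hsepmem
    have := sep_spec hne
    apply this
    constructor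
    · intro hx
      have h5 : sep X Y ∈ tr X (s k) := mem_tr.mpr ⟨hsk, hx⟩
      rw [← hXY] at h5
      exact (mem_tr.mp h5).2
    · intro hy
      have h5 : sep X Y ∈ tr Y (s k) := mem_tr.mpr ⟨hsk, hy⟩
      rw [hXY] at h5
      exact (mem_tr.mp h5).2

noncomputable def S (f : Set ℕ → Bool) : Set (Set ℕ) :=
  (Set.range fun X => C f X) ∪ (Set.range fun n : ℕ => ({n}ᶜ : Set ℕ))

lemma generate_neBot (f : Set ℕ → Bool) : (Filter.generate (S f)).NeBot := by
  rw [Filter.generate_neBot_iff]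
  intro t hts htf
  classical
  set g : Set ℕ → Set ℕ := fun s => if h : ∃ X, C f X = s then h.choose else ∅ with hg
  set T : Set (Set ℕ) := g '' (t ∩ Set.range (C f)) with hT
  have hTfin : T.Finite := (htf.inter_of_left _).image _
  set K : Set ℕ := {n : ℕ | ({n}ᶜ : Set ℕ) ∈ t} with hK
  have hKfin : K.Finite := by
    have : K = (fun n : ℕ => ({n}ᶜ : Set ℕ)) ⁻¹' t := rfl
    rw [this]
    apply htf.preimage
    intro a _ b _ hab
    have h2 : ({a}ᶜ : Set ℕ) = {b}ᶜ := hab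
    exact Set.singleton_injective (compl_injective h2)
  have hM : {n : ℕ | ∀ X ∈ T, n ∈ C f X}.Infinite := key f T hTfin
  obtain ⟨x, hx1, hx2⟩ := (hM.diff hKfin).nonempty
  refine ⟨x, ?_⟩
  intro s hs
  rcases hts hs with ⟨X, hX⟩ | ⟨n, hn⟩
  · have hex : ∃ Y, C f Y = s := ⟨X, hX⟩
    have hgs : C f (g s) = s := by
      simp only [hg]
      rw [dif_pos hex]
      exact hex.choose_spec
    have : g s ∈ T := Set.mem_image_of_mem _ ⟨hs, hex⟩
    have := hx1 _ this
    rwa [hgs] at this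
  · have hxn : x ≠ n := by
      rintro rfl
      exact hx2 (by rw [hK]; simpa [hn] using hs)
    rw [← hn]
    simpa using hxn

noncomputable def U (f : Set ℕ → Bool) : Ultrafilter ℕ :=
  @Ultrafilter.of _ (Filter.generate (S f)) (generate_neBot f)

lemma mem_U {f : Set ℕ → Bool} {s : Set ℕ} (hs : s ∈ S f) : s ∈ U f := by
  haveI := generate_neBot f
  have h1 : s ∈ Filter.generate (S f) :=
    Filter.mem_generate_iff.mpr ⟨{s}, by simpa using hs, Set.finite_singleton _, by simp⟩
  exact Ultrafilter.of_le _ h1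

lemma U_free (f : Set ℕ → Bool) (n : ℕ) : U f ≠ pure n := by
  intro h
  have : ({n}ᶜ : Set ℕ) ∈ U f := mem_U (Or.inr ⟨n, rfl⟩)
  rw [h] at this
  exact (Ultrafilter.mem_pure.mp this) rfl

lemma U_inj : Function.Injective U := by
  intro f g h
  funext X
  by_contra hfg
  have hCf : C f X ∈ U f := mem_U (Or.inl ⟨X, rfl⟩)
  have hCg : C g X ∈ U f := h ▸ mem_U (Or.inl ⟨X, rfl⟩)
  cases hf : f X <;> cases hgx : g X <;> rw [hf, hgx] at hfg <;> try exact hfg rfl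
  · rw [C, hf, if_neg (by simp)] at hCf
    rw [C, hgx, if_pos rfl] at hCg
    exact (Ultrafilter.compl_notMem_iff.mpr hCg) hCf
  · rw [C, hf, if_pos rfl] at hCf
    rw [C, hgx, if_neg (by simp)] at hCg
    exact (Ultrafilter.compl_notMem_iff.mpr hCf) hCg

end Pospisil

theorem stmt_1 :
    Cardinal.mk {U : Ultrafilter ℕ // ∀ n : ℕ, U ≠ pure n} = (2 : Cardinal) ^ ((2 : Cardinal) ^ Cardinal.aleph0) := by
  apply le_antisymm
  · calc Cardinal.mk {U : Ultrafilter ℕ // ∀ n : ℕ, U ≠ pure n}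
        ≤ Cardinal.mk (Ultrafilter ℕ) := Cardinal.mk_subtype_le _
      _ ≤ Cardinal.mk (Set (Set ℕ)) := by
          apply Cardinal.mk_le_of_injective (f := fun U : Ultrafilter ℕ => {s : Set ℕ | s ∈ U})
          intro V W h
          exact Ultrafilter.coe_injective (Filter.ext fun s => Set.ext_iff.mp h s)
      _ = (2 : Cardinal) ^ ((2 : Cardinal) ^ Cardinal.aleph0) := by
          rw [Cardinal.mk_set, Cardinal.mk_set, Cardinal.mk_nat]
  · calc (2 : Cardinal) ^ ((2 : Cardinal) ^ Cardinal.aleph0)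
        = Cardinal.mk (Set ℕ → Bool) := by
          rw [← Cardinal.mk_nat, ← Cardinal.mk_set, ← Cardinal.mk_bool, Cardinal.power_def]
      _ ≤ Cardinal.mk {U : Ultrafilter ℕ // ∀ n : ℕ, U ≠ pure n} := by
          apply Cardinal.mk_le_of_injective
            (f := fun f => (⟨Pospisil.U f, Pospisil.U_free f⟩ :
              {U : Ultrafilter ℕ // ∀ n : ℕ, U ≠ pure n}))
          intro f g h
          exact Pospisil.U_inj (congrArg Subtype.val h)
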